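/- arXiv:2510.08843 — 5 statements merged into one kernel-verified Lean document; each statement's English description precedes it below -/
import Mathlib

section
/- Let G = (V, E, γ) be a connected weighted graph on V = [n] with shortest-path distance dist, let δ̂ ∈ ℝ^n, and let δ̲⁰_j = δ̂_j − γ_{jj}, δ̄⁰_j = δ̂_j + γ_{jj}. Define δ̲_j = max_{k∈V} (δ̲⁰_k − dist(k,j)) and δ̄_j = min_{k∈V} (δ̄⁰_k + dist(k,j)). Then the vectors δ̲ and δ̄ both belong to the smooth uncertainty set U_S = {δ : |δ_i − δ̂_i| ≤ γ_{ii} ∀i, |δ_i − δ_j| ≤ γ_{ij} ∀{i,j}∈E}, provided U_S is nonempty (equivalently δ̲_j ≤ δ̄_j for all j). -/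
/-- Total weight of a walk given as a list of vertices. -/
def chainCost {n : ℕ} (γ : Fin n → Fin n → ℝ) : List (Fin n) → ℝ
  | [] => 0
  | [_] => 0
  | a :: b :: l => γ a b + chainCost γ (b :: l)

/-- A list of vertices is a walk if consecutive vertices are adjacent. -/
def IsWalk {n : ℕ} (E : Fin n → Fin n → Prop) : List (Fin n) → Prop
  | [] => True
  | [_] => True
  | a :: b :: l => E a b ∧ IsWalk E (b :: l)

/-- `dist` is the shortest-path distance of the weighted graph `(E, γ)`:
for each pair `(i, j)`, `dist i j` is the minimum of the costs of walks from `i` to `j`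
(in particular such a walk exists, i.e. the graph is connected). -/
def IsSPDist {n : ℕ} (E : Fin n → Fin n → Prop) (γ : Fin n → Fin n → ℝ)
    (dist : Fin n → Fin n → ℝ) : Prop :=
  ∀ i j : Fin n, IsLeast {c : ℝ | ∃ l : List (Fin n), IsWalk E l ∧
    l.head? = some i ∧ l.getLast? = some j ∧ c = chainCost γ l} (dist i j)

/-- The smooth uncertainty set `U_S(δ̂, G)`. -/
def smoothSet {n : ℕ} (δhat : Fin n → ℝ) (E : Fin n → Fin n → Prop)
    (γ : Fin n → Fin n → ℝ) : Set (Fin n → ℝ) :=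
  {δ | (∀ i, |δ i - δhat i| ≤ γ i i) ∧ ∀ i j, E i j → |δ i - δ j| ≤ γ i j}


lemma walk_append {n : ℕ} (E : Fin n → Fin n → Prop) (γ : Fin n → Fin n → ℝ) (j : Fin n) :
    ∀ l : List (Fin n), ∀ i : Fin n, IsWalk E l → l.getLast? = some i → E i j →
      IsWalk E (l ++ [j]) ∧ chainCost γ (l ++ [j]) = chainCost γ l + γ i j ∧
      (l ++ [j]).head? = l.head? ∧ (l ++ [j]).getLast? = some j
  | [], i, _, hlast, _ => by simp at hlast
  | [a], i, _, hlast, he => by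
      simp at hlast; subst hlast
      refine ⟨⟨he, trivial⟩, by simp [chainCost], by simp, by simp⟩
  | a :: b :: l, i, hw, hlast, he => by
      obtain ⟨hab, hw'⟩ := hw
      have hlast' : (b :: l).getLast? = some i := by
        simpa [List.getLast?_cons_cons] using hlast
      obtain ⟨w1, w2, w3, w4⟩ := walk_append E γ j (b :: l) i hw' hlast' he
      have hcons : (a :: b :: l) ++ [j] = a :: ((b :: l) ++ [j]) := by simp
      constructor
      · rw [hcons]
        simpa [IsWalk, hab] using w1
      refine ⟨?_, by simp, ?_⟩
      · rw [hcons]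
        simp only [List.cons_append] at w2 ⊢
        simp [chainCost, w2, add_assoc]
      · rw [hcons]
        simp only [List.cons_append] at w4 ⊢
        simpa [List.getLast?_cons_cons] using w4

lemma walk_bound {n : ℕ} (E : Fin n → Fin n → Prop) (γ : Fin n → Fin n → ℝ) (δ : Fin n → ℝ)
    (hδ : ∀ i j, E i j → |δ i - δ j| ≤ γ i j) :
    ∀ l : List (Fin n), ∀ i m : Fin n, IsWalk E l → l.head? = some i → l.getLast? = some m →
      |δ i - δ m| ≤ chainCost γ l
  | [], i, m, _, hh, _ => by simp at hh
  | [a], i, m, _, hh, hl => by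
      simp at hh hl; subst hh; subst hl; simp [chainCost]
  | a :: b :: l, i, m, hw, hh, hl => by
      obtain ⟨hab, hw'⟩ := hw
      simp at hh; subst hh
      have hl' : (b :: l).getLast? = some m := by
        simpa [List.getLast?_cons_cons] using hl
      have ih := walk_bound E γ δ hδ (b :: l) b m hw' (by simp) hl'
      calc |δ a - δ m| ≤ |δ a - δ b| + |δ b - δ m| := abs_sub_le _ _ _
        _ ≤ γ a b + chainCost γ (b :: l) := add_le_add (hδ a b hab) ih
        _ = chainCost γ (a :: b :: l) := rfl

section distlemmas
variable {n : ℕ} {E : Fin n → Fin n → Prop} {γ : Fin n → Fin n → ℝ}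
  {dist : Fin n → Fin n → ℝ}

lemma dist_self_nonpos (hSP : IsSPDist E γ dist) (j : Fin n) : dist j j ≤ 0 :=
  (hSP j j).2 ⟨[j], trivial, by simp, by simp, by simp [chainCost]⟩

lemma dist_tri (hSP : IsSPDist E γ dist) {i j : Fin n} (k : Fin n) (he : E i j) :
    dist k j ≤ dist k i + γ i j := by
  obtain ⟨l, hw, hh, hl, hc⟩ := (hSP k i).1
  obtain ⟨w1, w2, w3, w4⟩ := walk_append E γ j l i hw hl he
  exact (hSP k j).2 ⟨l ++ [j], w1, by rw [w3]; exact hh, w4, by rw [w2, hc]⟩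

lemma abs_sub_le_dist (hSP : IsSPDist E γ dist) {δ : Fin n → ℝ}
    (hδ : ∀ i j, E i j → |δ i - δ j| ≤ γ i j) (k j : Fin n) :
    |δ k - δ j| ≤ dist k j := by
  obtain ⟨l, hw, hh, hl, hc⟩ := (hSP k j).1
  rw [hc]
  exact walk_bound E γ δ hδ l k j hw hh hl


/-- the vectors `lo` and `hi`, defined coordinatewise by
`lo j = max_k (δ̂_k - γ_kk - dist(k,j))` and `hi j = min_k (δ̂_k + γ_kk + dist(k,j))`,
both belong to the smooth uncertainty set, provided it is nonempty. -/
theorem stmt5 {n : ℕ} (E : Fin n → Fin n → Prop) (γ : Fin n → Fin n → ℝ)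
    (hEsymm : ∀ i j, E i j → E j i) (hγsymm : ∀ i j, γ i j = γ j i)
    (hγnonneg : ∀ i j, 0 ≤ γ i j)
    (dist : Fin n → Fin n → ℝ) (hSP : IsSPDist E γ dist) (δhat : Fin n → ℝ)
    (lo hi : Fin n → ℝ)
    (hlo : ∀ j, IsGreatest {t : ℝ | ∃ k, t = δhat k - γ k k - dist k j} (lo j))
    (hhi : ∀ j, IsLeast {t : ℝ | ∃ k, t = δhat k + γ k k + dist k j} (hi j))
    (hne : (smoothSet δhat E γ).Nonempty) :
    lo ∈ smoothSet δhat E γ ∧ hi ∈ smoothSet δhat E γ := by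
  obtain ⟨δ, hδ1, hδ2⟩ := hne
  -- Fact A : every element of the lo-set at j is ≤ δ j
  have factA : ∀ k j : Fin n, δhat k - γ k k - dist k j ≤ δ j := by
    intro k j
    have h1 : δhat k - γ k k ≤ δ k := by
      have := abs_le.1 (hδ1 k); linarith [this.2]
    have h2 : δ k - δ j ≤ dist k j := (abs_le.1 (abs_sub_le_dist hSP hδ2 k j)).2
    linarith
  have factB : ∀ k j : Fin n, δ j ≤ δhat k + γ k k + dist k j := by
    intro k j
    have h1 : δ k ≤ δhat k + γ k k := by
      have := abs_le.1 (hδ1 k); linarith [this.1]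
    have h2 : δ j - δ k ≤ dist k j := by
      have := (abs_le.1 (abs_sub_le_dist hSP hδ2 k j)).1; linarith
    linarith
  have hlo_le : ∀ j, lo j ≤ δ j := by
    intro j
    obtain ⟨k, hk⟩ := (hlo j).1
    rw [hk]; exact factA k j
  have hle_hi : ∀ j, δ j ≤ hi j := by
    intro j
    obtain ⟨k, hk⟩ := (hhi j).1
    rw [hk]; exact factB k j
  have hlo_ge : ∀ j, δhat j - γ j j ≤ lo j := by
    intro j
    have := (hlo j).2 ⟨j, rfl⟩
    have := dist_self_nonpos hSP j
    linarith
  have hhi_le : ∀ j, hi j ≤ δhat j + γ j j := by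
    intro j
    have := (hhi j).2 ⟨j, rfl⟩
    have := dist_self_nonpos hSP j
    linarith
  -- edge bound for lo : lo i ≤ lo j + γ i j whenever E i j
  have lo_edge : ∀ i j, E i j → lo i ≤ lo j + γ i j := by
    intro i j he
    obtain ⟨k, hk⟩ := (hlo i).1
    have htri : dist k j ≤ dist k i + γ i j := dist_tri hSP k he
    have hmem : δhat k - γ k k - dist k j ≤ lo j := (hlo j).2 ⟨k, rfl⟩
    rw [hk]; linarith
  have hi_edge : ∀ i j, E i j → hi j ≤ hi i + γ i j := by
    intro i j he
    obtain ⟨k, hk⟩ := (hhi i).1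
    have htri : dist k j ≤ dist k i + γ i j := dist_tri hSP k he
    have hmem : hi j ≤ δhat k + γ k k + dist k j := (hhi j).2 ⟨k, rfl⟩
    rw [hk]; linarith
  have smooth_lo : lo ∈ smoothSet δhat E γ := by
    constructor
    · intro i
      rw [abs_le]
      have h1 := hlo_ge i
      have h2 := hlo_le i
      have h3 := (abs_le.1 (hδ1 i)).2
      constructor <;> linarith
    · intro i j he
      rw [abs_le]
      have h1 := lo_edge i j he
      have h2 := lo_edge j i (hEsymm i j he)
      rw [hγsymm j i] at h2
      constructor <;> linarith
  have smooth_hi : hi ∈ smoothSet δhat E γ := by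
    constructor
    · intro i
      rw [abs_le]
      have h1 := hhi_le i
      have h2 := hle_hi i
      have h3 := (abs_le.1 (hδ1 i)).1
      constructor <;> linarith
    · intro i j he
      rw [abs_le]
      have h1 := hi_edge i j he
      have h2 := hi_edge j i (hEsymm i j he)
      rw [hγsymm j i] at h2
      constructor <;> linarith
  exact ⟨smooth_lo, smooth_hi⟩
end distlemmas
end

section
/- Suppose for all (x,y) in a feasible set Z, C_j x ≤ 0 for every j ∈ [n] (i.e., S⁻ = [n]). Then (x,y) satisfies the robust constraint δᵀ C x + dᵀ y ≤ c for all δ ∈ U_S if and only if it satisfies the single linear constraint δ̲ᵀ C x + dᵀ y ≤ c, where δ̲ is the componentwise lower-projection vector of U_S. -/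
open Matrix


lemma tele {n : ℕ} {E : Fin n → Fin n → Prop} {γ : Fin n → Fin n → ℝ}
    {δ : Fin n → ℝ} (h : ∀ a b, E a b → δ a - δ b ≤ γ a b) :
    ∀ l : List (Fin n), ∀ i j, IsWalk E l → l.head? = some i → l.getLast? = some j →
      δ i - δ j ≤ chainCost γ l := by
  intro l
  induction l with
  | nil => intro i j _ h1; simp at h1
  | cons a t ih =>
    intro i j hw h1 h2
    simp at h1; subst h1
    match t with
    | [] => simp [List.getLast?] at h2; subst h2; simp [chainCost]
    | b :: t' =>
      obtain ⟨hab, hw'⟩ := hw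
      have h2' : (b :: t').getLast? = some j := h2
      have := ih b j hw' rfl h2'
      simp [chainCost]
      linarith [h a b hab]

lemma chainCost_append {n : ℕ} (γ : Fin n → Fin n → ℝ) :
    ∀ (l : List (Fin n)) (i j : Fin n), l.getLast? = some i →
      chainCost γ (l ++ [j]) = chainCost γ l + γ i j := by
  intro l
  induction l with
  | nil => intro i j h; simp at h
  | cons a t ih =>
    intro i j h
    match t with
    | [] => simp [List.getLast?] at h; subst h; simp [chainCost]
    | b :: t' =>
      have h' : (b :: t').getLast? = some i := h
      simp [chainCost] at *
      rw [ih i j h']; ring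

lemma isWalk_append {n : ℕ} (E : Fin n → Fin n → Prop) :
    ∀ (l : List (Fin n)) (i j : Fin n), IsWalk E l → l.getLast? = some i → E i j →
      IsWalk E (l ++ [j]) := by
  intro l
  induction l with
  | nil => intro i j _ h; simp at h
  | cons a t ih =>
    intro i j hw h hij
    match t with
    | [] => simp [List.getLast?] at h; subst h; exact ⟨hij, trivial⟩
    | b :: t' =>
      obtain ⟨hab, hw'⟩ := hw
      exact ⟨hab, ih i j hw' h hij⟩

/-- if `C_j x ≤ 0` for every `j` and every `(x,y) ∈ Z`, then the robust
constraint `δᵀ C x + dᵀ y ≤ c` for all `δ` in the smooth uncertainty set is equivalent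
to the single linear constraint with `δ` replaced by the lower-projection vector `lo`. -/
theorem stmt8 {n nx ny : ℕ} (E : Fin n → Fin n → Prop) (γ : Fin n → Fin n → ℝ)
    (hEsymm : ∀ i j, E i j → E j i) (hγsymm : ∀ i j, γ i j = γ j i)
    (hγnonneg : ∀ i j, 0 ≤ γ i j)
    (dist : Fin n → Fin n → ℝ) (hSP : IsSPDist E γ dist) (δhat : Fin n → ℝ)
    (lo : Fin n → ℝ)
    (hlo : ∀ j, IsGreatest {t : ℝ | ∃ k, t = δhat k - γ k k - dist k j} (lo j))
    (hne : (smoothSet δhat E γ).Nonempty)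
    (C : Matrix (Fin n) (Fin nx) ℝ) (d : Fin ny → ℝ) (c : ℝ)
    (Z : Set ((Fin nx → ℝ) × (Fin ny → ℝ)))
    (hneg : ∀ p ∈ Z, ∀ j, (C j) ⬝ᵥ p.1 ≤ 0) :
    ∀ p ∈ Z,
      ((∀ δ ∈ smoothSet δhat E γ, δ ⬝ᵥ (C *ᵥ p.1) + d ⬝ᵥ p.2 ≤ c) ↔
        lo ⬝ᵥ (C *ᵥ p.1) + d ⬝ᵥ p.2 ≤ c) := by
  -- lo is a lower bound of the smooth set
  have hlo_le : ∀ δ ∈ smoothSet δhat E γ, ∀ j, lo j ≤ δ j := by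
    intro δ hδ j
    obtain ⟨k, hk⟩ := (hlo j).1
    rw [hk]
    have hδk : δhat k - γ k k ≤ δ k := by
      have := hδ.1 k; rw [abs_le] at this; linarith [this.1]
    have hdist : δ k - δ j ≤ dist k j := by
      obtain ⟨l, hw, hh, hl, hc⟩ := (hSP k j).1
      have htel := tele (E := E) (γ := γ) (δ := δ)
        (fun a b hab => le_trans (le_abs_self _) (hδ.2 a b hab)) l k j hw hh hl
      rw [hc]; exact htel
    linarith
  -- dist i i ≤ 0
  have hdii : ∀ i, dist i i ≤ 0 := fun i =>
    (hSP i i).2 ⟨[i], trivial, rfl, rfl, rfl⟩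
  -- dist k j ≤ dist k i + γ i j for edges
  have hdist_step : ∀ k i j, E i j → dist k j ≤ dist k i + γ i j := by
    intro k i j hij
    obtain ⟨l, hw, hh, hl, hc⟩ := (hSP k i).1
    have hlast : (l ++ [j]).getLast? = some j := by
      cases l with
      | nil => simp at hl
      | cons a t =>
        rw [show a :: t ++ [j] = (a :: t) ++ [j] from rfl, List.getLast?_concat]
    have hhead : (l ++ [j]).head? = some k := by
      cases l with
      | nil => simp at hh
      | cons a t => simpa using hh
    have := (hSP k j).2 ⟨l ++ [j], isWalk_append E l i j hw hl hij, hhead, hlast,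
      (chainCost_append γ l i j hl).symm⟩
    linarith [this, hc]
  -- lo belongs to the smooth set
  have hlo_mem : lo ∈ smoothSet δhat E γ := by
    obtain ⟨δ0, hδ0⟩ := hne
    constructor
    · intro i
      rw [abs_le]
      constructor
      · have h1 : δhat i - γ i i - dist i i ∈ {t : ℝ | ∃ k, t = δhat k - γ k k - dist k i} :=
          ⟨i, rfl⟩
        have := (hlo i).2 h1
        linarith [hdii i]
      · have h1 := hlo_le δ0 hδ0 i
        have h2 := hδ0.1 i; rw [abs_le] at h2
        linarith [h2.2]
    · intro i j hij
      rw [abs_le]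
      have key : ∀ a b : Fin n, E a b → lo a - lo b ≤ γ a b := by
        intro a b hab
        obtain ⟨k, hk⟩ := (hlo a).1
        have hmem : δhat k - γ k k - dist k b ∈ {t : ℝ | ∃ k', t = δhat k' - γ k' k' - dist k' b} :=
          ⟨k, rfl⟩
        have h1 := (hlo b).2 hmem
        have h2 := hdist_step k a b hab
        rw [hk]; linarith
      constructor
      · have := key j i (hEsymm i j hij); rw [hγsymm j i] at this; linarith
      · exact key i j hij
  intro p hp
  constructor
  · intro h; exact h lo hlo_mem
  · intro h δ hδ
    have hmono : δ ⬝ᵥ (C *ᵥ p.1) ≤ lo ⬝ᵥ (C *ᵥ p.1) := by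
      apply Finset.sum_le_sum
      intro j _
      exact mul_le_mul_of_nonpos_right (hlo_le δ hδ j) (hneg p hp j)
    linarith
end

section
/- Fix j ∈ [n] and s ∈ ℝ^n with s_j ≥ 0 and s_k ≤ 0 for all k ≠ j. For ε ∈ [0, δ̄_j − δ̲_j], define δ(ε) by δ(ε)_j = δ̲_j + ε and δ(ε)_k = max{δ̲_k, δ̲_j + ε − dist(k,j)} for k ≠ j. Then δ(ε) ∈ U_S for every such ε, and max_{δ∈U_S} sᵀδ = max_{ε∈[0, δ̄_j−δ̲_j]} sᵀ δ(ε). -/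
lemma aux_chainCost_nonneg {n : ℕ} (γ : Fin n → Fin n → ℝ) (hγ : ∀ i j, 0 ≤ γ i j) :
    ∀ l : List (Fin n), 0 ≤ chainCost γ l
  | [] => le_rfl
  | [_] => le_rfl
  | _ :: b :: l => add_nonneg (hγ _ _) (aux_chainCost_nonneg γ hγ (b :: l))

lemma aux_walk_append {n : ℕ} (E : Fin n → Fin n → Prop) (γ : Fin n → Fin n → ℝ) :
    ∀ (l1 : List (Fin n)) (x : Fin n) (l2 : List (Fin n)),
    IsWalk E l1 → IsWalk E (x :: l2) → l1.getLast? = some x →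
    IsWalk E (l1 ++ l2) ∧ chainCost γ (l1 ++ l2) = chainCost γ l1 + chainCost γ (x :: l2)
  | [], x, l2, _, _, hl => by simp at hl
  | [a], x, l2, _, h2, hl => by
      simp at hl; subst hl
      simpa [chainCost] using h2
  | a :: b :: t, x, l2, h1, h2, hl => by
      obtain ⟨hab, hbt⟩ := h1
      have hl' : (b :: t).getLast? = some x := by
        rw [← hl]; exact List.getLast?_cons_cons.symm
      obtain ⟨hw, hc⟩ := aux_walk_append E γ (b :: t) x l2 hbt h2 hl'
      refine ⟨⟨hab, hw⟩, ?_⟩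
      show γ a b + chainCost γ (b :: t ++ l2) = γ a b + chainCost γ (b :: t) + chainCost γ (x :: l2)
      rw [hc]; ring

lemma aux_dist_self {n : ℕ} {E : Fin n → Fin n → Prop} {γ : Fin n → Fin n → ℝ}
    {dist : Fin n → Fin n → ℝ} (hSP : IsSPDist E γ dist) (hγ : ∀ i j, 0 ≤ γ i j)
    (i : Fin n) : dist i i = 0 := by
  refine le_antisymm ((hSP i i).2 ⟨[i], trivial, rfl, rfl, rfl⟩) ?_
  obtain ⟨l, _, _, _, hc⟩ := (hSP i i).1
  exact hc ▸ aux_chainCost_nonneg γ hγ l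

lemma aux_dist_triangle {n : ℕ} {E : Fin n → Fin n → Prop} {γ : Fin n → Fin n → ℝ}
    {dist : Fin n → Fin n → ℝ} (hSP : IsSPDist E γ dist)
    (i j k : Fin n) : dist i k ≤ dist i j + dist j k := by
  obtain ⟨l1, hw1, hh1, hl1, hc1⟩ := (hSP i j).1
  obtain ⟨l2, hw2, hh2, hl2, hc2⟩ := (hSP j k).1
  cases l2 with
  | nil => simp at hh2
  | cons x t =>
    have hx : x = j := by simpa using hh2
    obtain ⟨hw, hc⟩ := aux_walk_append E γ l1 x t hw1 hw2 (by rw [hl1, hx])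
    refine (hSP i k).2 ⟨l1 ++ t, hw, ?_, ?_, by rw [hc, ← hc1, ← hc2]⟩
    · cases l1 with
      | nil => simp at hl1
      | cons a t1 => simpa using hh1
    · cases t with
      | nil =>
        have hxk : x = k := by simpa using hl2
        rw [List.append_nil, hl1, hx.symm.trans hxk]
      | cons y t' =>
        rw [List.getLast?_append_of_ne_nil l1 (by simp), ← List.getLast?_cons_cons (a := x)]
        exact hl2

lemma aux_dist_le_edge {n : ℕ} {E : Fin n → Fin n → Prop} {γ : Fin n → Fin n → ℝ}
    {dist : Fin n → Fin n → ℝ} (hSP : IsSPDist E γ dist)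
    {i k : Fin n} (h : E i k) : dist i k ≤ γ i k :=
  (hSP i k).2 ⟨[i, k], ⟨h, trivial⟩, rfl, rfl, by simp [chainCost]⟩

lemma aux_abs_sub_le_chainCost {n : ℕ} {E : Fin n → Fin n → Prop} {γ : Fin n → Fin n → ℝ}
    {δ : Fin n → ℝ} (hδ : ∀ i j, E i j → |δ i - δ j| ≤ γ i j) :
    ∀ (l : List (Fin n)), IsWalk E l → ∀ i k, l.head? = some i → l.getLast? = some k →
      |δ i - δ k| ≤ chainCost γ l
  | [], _, i, k, hh, _ => by simp at hh
  | [a], _, i, k, hh, hl => by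
      simp at hh hl; subst hh; subst hl; simp [chainCost]
  | a :: b :: t, hw, i, k, hh, hl => by
      have ha : a = i := by simpa using hh
      subst ha
      have hl' : (b :: t).getLast? = some k := by
        rw [← hl]; exact List.getLast?_cons_cons.symm
      have ih := aux_abs_sub_le_chainCost hδ (b :: t) hw.2 b k rfl hl'
      calc |δ a - δ k| ≤ |δ a - δ b| + |δ b - δ k| := abs_sub_le _ _ _
        _ ≤ γ a b + chainCost γ (b :: t) := add_le_add (hδ a b hw.1) ih

lemma aux_smooth_abs_le_dist {n : ℕ} {E : Fin n → Fin n → Prop} {γ : Fin n → Fin n → ℝ}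
    {dist : Fin n → Fin n → ℝ} (hSP : IsSPDist E γ dist) {δhat δ : Fin n → ℝ}
    (hδ : δ ∈ smoothSet δhat E γ) (i k : Fin n) : |δ i - δ k| ≤ dist i k := by
  obtain ⟨l, hw, hh, hl, hc⟩ := (hSP i k).1
  exact hc ▸ aux_abs_sub_le_chainCost hδ.2 l hw i k hh hl

open Matrix

/-- for `s` with `s j ≥ 0` and `s k ≤ 0` for `k ≠ j`, the curve
`δ(ε)_j = lo j + ε`, `δ(ε)_k = max (lo k) (lo j + ε - dist k j)` stays in the smooth
uncertainty set for `ε ∈ [0, hi j - lo j]`, and the maximum of `sᵀδ` over the smooth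
set equals the maximum of `sᵀδ(ε)` over this interval. -/
theorem stmt10 {n : ℕ} (E : Fin n → Fin n → Prop) (γ : Fin n → Fin n → ℝ)
    (hEsymm : ∀ i j, E i j → E j i) (hγsymm : ∀ i j, γ i j = γ j i)
    (hγnonneg : ∀ i j, 0 ≤ γ i j)
    (dist : Fin n → Fin n → ℝ) (hSP : IsSPDist E γ dist) (δhat : Fin n → ℝ)
    (lo hi : Fin n → ℝ)
    (hlo : ∀ j, IsGreatest {t : ℝ | ∃ k, t = δhat k - γ k k - dist k j} (lo j))
    (hhi : ∀ j, IsLeast {t : ℝ | ∃ k, t = δhat k + γ k k + dist k j} (hi j))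
    (hne : (smoothSet δhat E γ).Nonempty)
    (j : Fin n) (s : Fin n → ℝ) (hsj : 0 ≤ s j) (hsk : ∀ k, k ≠ j → s k ≤ 0) :
    (∀ ε ∈ Set.Icc (0 : ℝ) (hi j - lo j),
        (fun k => if k = j then lo j + ε else max (lo k) (lo j + ε - dist k j)) ∈
          smoothSet δhat E γ) ∧
    sSup {t : ℝ | ∃ δ ∈ smoothSet δhat E γ, t = s ⬝ᵥ δ} =
      sSup {t : ℝ | ∃ ε ∈ Set.Icc (0 : ℝ) (hi j - lo j),
        t = s ⬝ᵥ (fun k => if k = j then lo j + ε else max (lo k) (lo j + ε - dist k j))} := by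

  have hdself : ∀ i, dist i i = 0 := aux_dist_self hSP hγnonneg
  have htri := aux_dist_triangle hSP
  have hlo_mem : ∀ i : Fin n, ∃ k, lo i = δhat k - γ k k - dist k i := fun i => (hlo i).1
  have hlo_ub : ∀ i k : Fin n, δhat k - γ k k - dist k i ≤ lo i := fun i k => (hlo i).2 ⟨k, rfl⟩
  have hhi_lb : ∀ i k : Fin n, hi i ≤ δhat k + γ k k + dist k i := fun i k => (hhi i).2 ⟨k, rfl⟩
  have hlo_ge : ∀ i, δhat i - γ i i ≤ lo i := fun i => by
    have h := hlo_ub i i; rw [hdself i] at h; linarith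
  have hhi_le : ∀ i, hi i ≤ δhat i + γ i i := fun i => by
    have h := hhi_lb i i; rw [hdself i] at h; linarith
  have hmem_lo : ∀ δ ∈ smoothSet δhat E γ, ∀ i, lo i ≤ δ i := by
    intro δ hδ i
    obtain ⟨k, hk⟩ := hlo_mem i
    have h1 : |δ k - δhat k| ≤ γ k k := hδ.1 k
    have h2 : |δ k - δ i| ≤ dist k i := aux_smooth_abs_le_dist hSP hδ k i
    rw [abs_le] at h1 h2
    rw [hk]; linarith [h1.1, h2.2]
  have hmem_hi : ∀ δ ∈ smoothSet δhat E γ, ∀ i, δ i ≤ hi i := by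
    intro δ hδ i
    have h1 : |δ i - δhat i| ≤ γ i i := hδ.1 i
    have h2 : |δ i - δ i| ≤ dist i i := aux_smooth_abs_le_dist hSP hδ i i
    obtain ⟨δ', hδ'⟩ := hne
    -- direct: δ i ≤ δhat k + γ k k + dist k i for all k, in particular need hi i membership
    have hstep : ∀ k, δ i ≤ δhat k + γ k k + dist k i := by
      intro k
      have h3 : |δ k - δhat k| ≤ γ k k := hδ.1 k
      have h4 : |δ k - δ i| ≤ dist k i := aux_smooth_abs_le_dist hSP hδ k i
      rw [abs_le] at h3 h4
      linarith [h3.2, h4.1]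
    obtain ⟨k, hk⟩ := (hhi i).1
    rw [hk]; exact hstep k
  obtain ⟨δ0, hδ0⟩ := hne
  have hlohi : ∀ i, lo i ≤ hi i := fun i => (hmem_lo δ0 hδ0 i).trans (hmem_hi δ0 hδ0 i)
  have hdistlip : ∀ i k, E i k → |dist i j - dist k j| ≤ γ i k := by
    intro i k h
    rw [abs_sub_le_iff]
    refine ⟨?_, ?_⟩
    · have h1 := htri i k j
      have h2 := aux_dist_le_edge hSP h
      linarith
    · have h1 := htri k i j
      have h2 := aux_dist_le_edge hSP (hEsymm i k h)
      have h3 := hγsymm k i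
      linarith
  have hlolip : ∀ i k, E i k → |lo i - lo k| ≤ γ i k := by
    intro i k h
    rw [abs_sub_le_iff]
    refine ⟨?_, ?_⟩
    · obtain ⟨m, hm⟩ := hlo_mem i
      have h1 := hlo_ub k m
      have h2 := htri m i k
      have h3 := aux_dist_le_edge hSP h
      rw [hm]; linarith
    · obtain ⟨m, hm⟩ := hlo_mem k
      have h1 := hlo_ub i m
      have h2 := htri m k i
      have h3 := aux_dist_le_edge hSP (hEsymm i k h)
      have h4 := hγsymm k i
      rw [hm]; linarith
  have hA : ∀ ε ∈ Set.Icc (0 : ℝ) (hi j - lo j),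
      (fun k => if k = j then lo j + ε else max (lo k) (lo j + ε - dist k j)) ∈
        smoothSet δhat E γ := by
    rintro ε ⟨hε0, hε1⟩
    have hmax : ∀ k, (if k = j then lo j + ε else max (lo k) (lo j + ε - dist k j)) =
        max (lo k) (lo j + ε - dist k j) := by
      intro k
      by_cases hk : k = j
      · subst hk; rw [if_pos rfl, hdself, max_eq_right] <;> linarith
      · rw [if_neg hk]
    refine ⟨?_, ?_⟩
    · intro i
      simp only [hmax]
      rw [abs_le]
      refine ⟨?_, ?_⟩
      · have h1 := hlo_ge i
        have h2 : lo i ≤ max (lo i) (lo j + ε - dist i j) := le_max_left _ _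
        linarith
      · apply sub_le_iff_le_add.mpr
        apply max_le
        · linarith [hlohi i, hhi_le i]
        · have h1 := hhi_lb j i
          linarith
    · intro i k h
      simp only [hmax]
      calc |max (lo i) (lo j + ε - dist i j) - max (lo k) (lo j + ε - dist k j)|
          ≤ max |lo i - lo k| |(lo j + ε - dist i j) - (lo j + ε - dist k j)| :=
            abs_max_sub_max_le_max _ _ _ _
        _ ≤ γ i k := by
            apply max_le (hlolip i k h)
            have heq : (lo j + ε - dist i j) - (lo j + ε - dist k j) = -(dist i j - dist k j) := by
              ring
            rw [heq, abs_neg]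
            exact hdistlip i k h
  refine ⟨hA, ?_⟩
  have hsubset : {t : ℝ | ∃ ε ∈ Set.Icc (0 : ℝ) (hi j - lo j),
        t = s ⬝ᵥ (fun k => if k = j then lo j + ε else max (lo k) (lo j + ε - dist k j))} ⊆
      {t : ℝ | ∃ δ ∈ smoothSet δhat E γ, t = s ⬝ᵥ δ} := by
    rintro t ⟨ε, hε, rfl⟩
    exact ⟨_, hA ε hε, rfl⟩
  have hAbdd : BddAbove {t : ℝ | ∃ δ ∈ smoothSet δhat E γ, t = s ⬝ᵥ δ} := by
    refine ⟨∑ k, max (s k * lo k) (s k * hi k), ?_⟩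
    rintro t ⟨δ, hδ, rfl⟩
    simp only [dotProduct]
    apply Finset.sum_le_sum
    intro k _
    rcases le_total 0 (s k) with h | h
    · exact le_max_of_le_right (mul_le_mul_of_nonneg_left (hmem_hi δ hδ k) h)
    · exact le_max_of_le_left (mul_le_mul_of_nonpos_left (hmem_lo δ hδ k) h)
  have hεj : (0 : ℝ) ≤ hi j - lo j := by linarith [hlohi j]
  have hBne : {t : ℝ | ∃ ε ∈ Set.Icc (0 : ℝ) (hi j - lo j),
      t = s ⬝ᵥ (fun k => if k = j then lo j + ε else max (lo k) (lo j + ε - dist k j))}.Nonempty :=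
    ⟨_, 0, ⟨le_rfl, hεj⟩, rfl⟩
  have hAne : {t : ℝ | ∃ δ ∈ smoothSet δhat E γ, t = s ⬝ᵥ δ}.Nonempty := ⟨_, δ0, hδ0, rfl⟩
  have hBbdd : BddAbove {t : ℝ | ∃ ε ∈ Set.Icc (0 : ℝ) (hi j - lo j),
      t = s ⬝ᵥ (fun k => if k = j then lo j + ε else max (lo k) (lo j + ε - dist k j))} :=
    hAbdd.mono hsubset
  apply le_antisymm
  · apply csSup_le hAne
    rintro t ⟨δ, hδ, rfl⟩
    have hε'mem : δ j - lo j ∈ Set.Icc (0 : ℝ) (hi j - lo j) :=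
      ⟨by linarith [hmem_lo δ hδ j], by linarith [hmem_hi δ hδ j]⟩
    have hle : s ⬝ᵥ δ ≤ s ⬝ᵥ (fun k => if k = j then lo j + (δ j - lo j)
        else max (lo k) (lo j + (δ j - lo j) - dist k j)) := by
      simp only [dotProduct]
      apply Finset.sum_le_sum
      intro k _
      by_cases hk : k = j
      · rw [hk]
        have : (if j = j then lo j + (δ j - lo j)
            else max (lo j) (lo j + (δ j - lo j) - dist j j)) = δ j := by
          rw [if_pos rfl]; ring
        rw [this]
      · simp only [if_neg hk]
        apply mul_le_mul_of_nonpos_left _ (hsk k hk)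
        apply max_le (hmem_lo δ hδ k)
        have h2 := aux_smooth_abs_le_dist hSP hδ k j
        rw [abs_le] at h2
        linarith [h2.1]
    exact hle.trans (le_csSup hBbdd ⟨δ j - lo j, hε'mem, rfl⟩)
  · exact csSup_le_csSup hAbdd hBne hsubset
end

section
/- Let δ̃ have mean 0 and positive definite covariance Σ, and let U = {δ : Aδ ≤ b} with b_i > 0 for all i ∈ [k]. Define R = min_{i∈[k]} b_i/‖A_i Σ^{1/2}‖₂. If (x,y) satisfies the robust constraint δᵀ C x + dᵀ y ≤ c for all δ ∈ U, then P[δ̃ᵀ C x + dᵀ y > c] ≤ 1/(1 + R²). -/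
/-!
Writing `δ = S w`, the polytope `{δ | A δ ≤ b}` contains the image under `S` of the Euclidean ball
of radius `R`, since `(A S w)ᵢ ≤ ‖Aᵢ S‖ ‖w‖ ≤ bᵢ`. Maximising `δ ⬝ v` over that ball, the robust
constraint yields the margin `c - d ⬝ y ≥ R ‖S v‖` for `v = C x`. The random term `X ⬝ v` has mean
`0` and variance `v ⬝ S S v = ‖S v‖²`, so Cantelli's inequality `P[ξ ≥ t] ≤ σ² / (σ² + t²)` with
`t ≥ R σ` bounds the violation probability by `1 / (1 + R²)`.
-/

open Matrix MeasureTheory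

noncomputable def euclNorm {m : ℕ} (v : Fin m → ℝ) : ℝ := Real.sqrt (∑ i, v i ^ 2)

open ProbabilityTheory

section EuclNorm

variable {m : ℕ}

lemma euclNorm_eq_norm (v : Fin m → ℝ) :
    euclNorm v = ‖(WithLp.toLp 2 v : EuclideanSpace ℝ (Fin m))‖ := by
  simp [euclNorm, EuclideanSpace.norm_eq]

lemma dotProduct_eq_inner (u w : Fin m → ℝ) :
    u ⬝ᵥ w = inner ℝ (WithLp.toLp 2 u : EuclideanSpace ℝ (Fin m)) (WithLp.toLp 2 w) := by
  simp [EuclideanSpace.inner_eq_star_dotProduct, dotProduct_comm]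

lemma euclNorm_nonneg (u : Fin m → ℝ) : 0 ≤ euclNorm u := Real.sqrt_nonneg _

lemma euclNorm_pos {u : Fin m → ℝ} (hu : u ≠ 0) : 0 < euclNorm u := by
  rw [euclNorm_eq_norm, norm_pos_iff]
  simpa using hu

lemma euclNorm_smul (a : ℝ) (u : Fin m → ℝ) : euclNorm (a • u) = |a| * euclNorm u := by
  rw [euclNorm_eq_norm, euclNorm_eq_norm, WithLp.toLp_smul, norm_smul, Real.norm_eq_abs]

lemma dotProduct_self_eq_euclNorm_sq (u : Fin m → ℝ) : u ⬝ᵥ u = euclNorm u ^ 2 := by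
  rw [dotProduct_eq_inner, euclNorm_eq_norm, real_inner_self_eq_norm_sq]

lemma dotProduct_le_euclNorm_mul (u w : Fin m → ℝ) : u ⬝ᵥ w ≤ euclNorm u * euclNorm w := by
  rw [dotProduct_eq_inner, euclNorm_eq_norm, euclNorm_eq_norm]
  exact real_inner_le_norm _ _

lemma mul_euclNorm_le_of_forall_dotProduct_le {R t : ℝ} {u : Fin m → ℝ} (hR : 0 ≤ R)
    (h : ∀ w, euclNorm w ≤ R → w ⬝ᵥ u ≤ t) : R * euclNorm u ≤ t := by
  rcases (euclNorm_nonneg u).eq_or_lt with hu | hu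
  · simpa [← hu] using h 0 (by simpa [euclNorm] using hR)
  · have hw : euclNorm ((R / euclNorm u) • u) ≤ R := by
      rw [euclNorm_smul, abs_of_nonneg (by positivity), div_mul_cancel₀ _ hu.ne']
    calc R * euclNorm u = (R / euclNorm u) • u ⬝ᵥ u := by
          rw [smul_dotProduct, dotProduct_self_eq_euclNorm_sq, smul_eq_mul]
          field_simp
      _ ≤ t := h _ hw

lemma mulVec_le_of_euclNorm_le {k : ℕ} {M : Matrix (Fin k) (Fin m) ℝ} {b : Fin k → ℝ}
    (hb : ∀ i, 0 < b i) {R : ℝ} (hR : ∀ i, R ≤ b i / euclNorm (M i)) {w : Fin m → ℝ}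
    (hw : euclNorm w ≤ R) (i : Fin k) : (M *ᵥ w) i ≤ b i := by
  calc (M *ᵥ w) i ≤ euclNorm (M i) * euclNorm w := dotProduct_le_euclNorm_mul _ _
    _ ≤ b i := by
      rcases (euclNorm_nonneg (M i)).eq_or_lt with hM | hM
      · rw [← hM, zero_mul]
        exact (hb i).le
      · calc euclNorm (M i) * euclNorm w ≤ euclNorm (M i) * (b i / euclNorm (M i)) :=
            mul_le_mul_of_nonneg_left (hw.trans (hR i)) hM.le
          _ = b i := mul_div_cancel₀ _ hM.ne'

end EuclNorm

lemma mulVec_dotProduct_of_transpose_eq {m : Type*} [Fintype m] {S : Matrix m m ℝ}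
    (hS : Sᵀ = S) (w v : m → ℝ) : (S *ᵥ w) ⬝ᵥ v = w ⬝ᵥ (S *ᵥ v) := by
  rw [dotProduct_comm, dotProduct_mulVec, ← mulVec_transpose, hS, dotProduct_comm]

lemma mul_euclNorm_mulVec_le_of_forall_mulVec_le {n k : ℕ} {S : Matrix (Fin n) (Fin n) ℝ}
    (hS : Sᵀ = S) {A : Matrix (Fin k) (Fin n) ℝ} {b : Fin k → ℝ} (hb : ∀ i, 0 < b i) {R : ℝ}
    (hR0 : 0 ≤ R) (hR : ∀ i, R ≤ b i / euclNorm (A i ᵥ* S)) {v : Fin n → ℝ} {t : ℝ}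
    (hrob : ∀ δ, (∀ i, (A *ᵥ δ) i ≤ b i) → δ ⬝ᵥ v ≤ t) : R * euclNorm (S *ᵥ v) ≤ t := by
  refine mul_euclNorm_le_of_forall_dotProduct_le hR0 fun w hw => ?_
  rw [← mulVec_dotProduct_of_transpose_eq hS]
  refine hrob _ fun i => ?_
  rw [mulVec_mulVec]
  exact mulVec_le_of_euclNorm_le hb hR hw i

section Probability

variable {Ω : Type*} [MeasurableSpace Ω] {μ : Measure Ω}

/-- **Cantelli's inequality**. -/
theorem measureReal_mean_add_le_le_variance_div [IsProbabilityMeasure μ] {ξ : Ω → ℝ}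
    (hξ : MemLp ξ 2 μ) {t : ℝ} (ht : 0 < t) :
    μ.real {ω | μ[ξ] + t ≤ ξ ω} ≤ Var[ξ; μ] / (Var[ξ; μ] + t ^ 2) := by
  set s := Var[ξ; μ]
  have hs : 0 ≤ s := variance_nonneg ξ μ
  -- Markov's inequality for `(ξ - μ[ξ] + u)²` with the optimal shift `u = s / t`.
  set u := s / t
  set η : Ω → ℝ := fun ω => ξ ω - μ[ξ] + u
  have hη : MemLp η 2 μ := (hξ.sub (memLp_const _)).add (memLp_const _)
  have hη_mean : μ[η] = u := by
    rw [integral_add (f := fun ω => ξ ω - μ[ξ])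
      ((hξ.integrable one_le_two).sub (integrable_const _)) (integrable_const u),
      integral_sub (hξ.integrable one_le_two) (integrable_const _)]
    simp
  have hη_sq : μ[η ^ 2] = s + u ^ 2 := by
    have hvar : Var[η; μ] = s := by
      rw [variance_add_const (X := fun ω => ξ ω - μ[ξ]) (hξ.1.sub aestronglyMeasurable_const),
        variance_sub_const hξ.1]
    rw [← hvar, variance_eq_sub hη, hη_mean]
    ring
  have hsub : {ω | μ[ξ] + t ≤ ξ ω} ⊆ {ω | (t + u) ^ 2 ≤ (η ^ 2) ω} := fun ω hω => by
    simp only [Set.mem_ofPred_eq, Pi.pow_apply, η] at hω ⊢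
    exact pow_le_pow_left₀ (by positivity) (by linarith) 2
  have hmarkov := mul_meas_ge_le_integral_of_nonneg (ae_of_all μ fun ω => sq_nonneg (η ω))
    hη.integrable_sq ((t + u) ^ 2)
  calc μ.real {ω | μ[ξ] + t ≤ ξ ω} ≤ μ.real {ω | (t + u) ^ 2 ≤ (η ^ 2) ω} :=
        measureReal_mono hsub
    _ ≤ (s + u ^ 2) / (t + u) ^ 2 := by
        rw [le_div_iff₀ (by positivity), mul_comm, ← hη_sq]
        exact hmarkov
    _ = s / (s + t ^ 2) := by
        simp only [u]
        field_simp
        ring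

lemma measureReal_lt_le_one_div_one_add_sq [IsProbabilityMeasure μ] {ξ : Ω → ℝ}
    (hξ : MemLp ξ 2 μ) (hmean : μ[ξ] = 0) {σ : ℝ} (hσ : 0 < σ) (hvar : Var[ξ; μ] = σ ^ 2)
    {R t : ℝ} (hR : 0 ≤ R) (hRt : R * σ ≤ t) :
    μ.real {ω | t < ξ ω} ≤ 1 / (1 + R ^ 2) := by
  rcases (mul_nonneg hR hσ.le |>.trans hRt).eq_or_lt with ht | ht
  · obtain rfl : R = 0 := by nlinarith
    simp
  calc μ.real {ω | t < ξ ω} ≤ μ.real {ω | μ[ξ] + t ≤ ξ ω} :=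
        measureReal_mono fun ω hω => by
          simp only [Set.mem_ofPred_eq, hmean, zero_add] at hω ⊢
          exact hω.le
    _ ≤ σ ^ 2 / (σ ^ 2 + t ^ 2) := hvar ▸ measureReal_mean_add_le_le_variance_div hξ ht
    _ ≤ 1 / (1 + R ^ 2) := by
        rw [div_le_div_iff₀ (by positivity) (by positivity)]
        nlinarith [mul_self_le_mul_self (mul_nonneg hR hσ.le) hRt]

variable {ι : Type*} [Fintype ι] {X : Ω → ι → ℝ}

lemma integral_dotProduct (hX : ∀ i, Integrable (fun ω => X ω i) μ) (v : ι → ℝ) :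
    ∫ ω, X ω ⬝ᵥ v ∂μ = (fun i => ∫ ω, X ω i ∂μ) ⬝ᵥ v := by
  simp only [dotProduct]
  rw [integral_finsetSum _ fun i _ => (hX i).mul_const _]
  simp only [integral_mul_const]

lemma memLp_dotProduct {p : ENNReal} (hX : ∀ i, MemLp (fun ω => X ω i) p μ) (v : ι → ℝ) :
    MemLp (fun ω => X ω ⬝ᵥ v) p μ := by
  simp only [dotProduct]
  exact memLp_finsetSum _ fun i _ => (hX i).mul_const _

lemma variance_dotProduct [IsFiniteMeasure μ] (hX : ∀ i, MemLp (fun ω => X ω i) 2 μ)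
    (v : ι → ℝ) :
    Var[fun ω => X ω ⬝ᵥ v; μ] =
      v ⬝ᵥ (Matrix.of (fun i j => cov[fun ω => X ω i, fun ω => X ω j; μ]) *ᵥ v) := by
  simp only [dotProduct, mulVec, of_apply]
  rw [variance_fun_sum fun i => (hX i).mul_const (v i)]
  simp only [covariance_mul_const_left, covariance_mul_const_right, Finset.mul_sum]
  exact Finset.sum_congr rfl fun i _ => Finset.sum_congr rfl fun j _ => by ring

end Probability

theorem stmt13_general {n k nx ny : ℕ} {Ωs : Type*} [MeasurableSpace Ωs] (μ : Measure Ωs)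
    [IsProbabilityMeasure μ] (X : Ωs → Fin n → ℝ)
    (hXm : ∀ i, Measurable fun ω => X ω i)
    (hint : ∀ i j, Integrable (fun ω => X ω i * X ω j) μ)
    (Sig S : Matrix (Fin n) (Fin n) ℝ)
    (hS : S.PosDef) (hSsq : S * S = Sig)
    (hmean : ∀ i, ∫ ω, X ω i ∂μ = 0)
    (hcov : ∀ i j, ∫ ω, X ω i * X ω j ∂μ = Sig i j)
    (A : Matrix (Fin k) (Fin n) ℝ) (b : Fin k → ℝ) (hb : ∀ i, 0 < b i)
    (R : ℝ) (hR : IsLeast {r : ℝ | ∃ i, r = b i / euclNorm ((A i) ᵥ* S)} R)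
    (C : Matrix (Fin n) (Fin nx) ℝ) (d : Fin ny → ℝ) (c : ℝ)
    (x : Fin nx → ℝ) (y : Fin ny → ℝ)
    (hrob : ∀ δ : Fin n → ℝ, (∀ i, (A *ᵥ δ) i ≤ b i) →
      δ ⬝ᵥ (C *ᵥ x) + d ⬝ᵥ y ≤ c) :
    (μ {ω | c < X ω ⬝ᵥ (C *ᵥ x) + d ⬝ᵥ y}).toReal ≤ 1 / (1 + R ^ 2) := by
  obtain ⟨⟨i₀, hi₀⟩, hR_le⟩ := hR
  have hR0 : 0 ≤ R := hi₀ ▸ div_nonneg (hb i₀).le (euclNorm_nonneg _)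
  set v := C *ᵥ x
  set e := d ⬝ᵥ y
  have hSt : Sᵀ = S := by simpa using hS.isHermitian.eq
  have hmargin : R * euclNorm (S *ᵥ v) ≤ c - e :=
    mul_euclNorm_mulVec_le_of_forall_mulVec_le hSt hb hR0 (fun i => hR_le ⟨i, rfl⟩)
      fun δ hδ => le_sub_iff_add_le.2 (hrob δ hδ)
  have hXL2 : ∀ i, MemLp (fun ω => X ω i) 2 μ := fun i =>
    (memLp_two_iff_integrable_sq (hXm i).aestronglyMeasurable).2
      (by simpa only [sq] using hint i i)
  have hcov_eq : Matrix.of (fun i j => cov[fun ω => X ω i, fun ω => X ω j; μ]) = Sig := by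
    ext i j
    rw [of_apply, covariance_eq_sub (hXL2 i) (hXL2 j), hmean, hmean, mul_zero, sub_zero]
    exact hcov i j
  rw [← measureReal_def]
  rcases eq_or_ne v 0 with hv | hv
  · have hce : ¬c < e := by simpa [hv, euclNorm] using hmargin
    simp only [hv, dotProduct_zero, zero_add, hce, Set.ofPred_false, measureReal_empty]
    positivity
  simp_rw [← sub_lt_iff_lt_add]
  refine measureReal_lt_le_one_div_one_add_sq (memLp_dotProduct hXL2 v) ?_
    (euclNorm_pos fun hSv => ?_) ?_ hR0 hmargin
  · rw [integral_dotProduct fun i => (hXL2 i).integrable one_le_two]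
    simp [hmean]
  · simpa [hSv] using hS.dotProduct_mulVec_pos hv
  · rw [variance_dotProduct hXL2, hcov_eq, ← hSsq, ← mulVec_mulVec,
      ← mulVec_dotProduct_of_transpose_eq hSt, dotProduct_self_eq_euclNorm_sq]

/-- for a random vector `δ̃` with mean 0 and positive definite covariance `Σ`,
and a polyhedron `U = {δ : Aδ ≤ b}` with `b > 0`, setting `R = min_i b_i / ‖A_i Σ^{1/2}‖₂`,
any `(x, y)` satisfying the robust constraint over `U` violates the uncertain constraint
with probability at most `1/(1 + R²)`. -/
theorem stmt13 {n k nx ny : ℕ} {Ωs : Type*} [MeasurableSpace Ωs] (μ : Measure Ωs)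
    [IsProbabilityMeasure μ] (X : Ωs → Fin n → ℝ)
    (hXm : ∀ i, Measurable fun ω => X ω i)
    (hint : ∀ i j, Integrable (fun ω => X ω i * X ω j) μ)
    (Sig S : Matrix (Fin n) (Fin n) ℝ)
    (hSig : Sig.PosDef) (hS : S.PosDef) (hSsq : S * S = Sig)
    (hmean : ∀ i, ∫ ω, X ω i ∂μ = 0)
    (hcov : ∀ i j, ∫ ω, X ω i * X ω j ∂μ = Sig i j)
    (A : Matrix (Fin k) (Fin n) ℝ) (b : Fin k → ℝ) (hb : ∀ i, 0 < b i)
    (R : ℝ) (hR : IsLeast {r : ℝ | ∃ i, r = b i / euclNorm ((A i) ᵥ* S)} R)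
    (C : Matrix (Fin n) (Fin nx) ℝ) (d : Fin ny → ℝ) (c : ℝ)
    (x : Fin nx → ℝ) (y : Fin ny → ℝ)
    (hrob : ∀ δ : Fin n → ℝ, (∀ i, (A *ᵥ δ) i ≤ b i) →
      δ ⬝ᵥ (C *ᵥ x) + d ⬝ᵥ y ≤ c) :
    (μ {ω | c < X ω ⬝ᵥ (C *ᵥ x) + d ⬝ᵥ y}).toReal ≤ 1 / (1 + R ^ 2) :=
  stmt13_general μ X hXm hint Sig S hS hSsq hmean hcov A b hb R hR C d c x y hrob
end

section
/- Substituting z_{jd} = Σ_{k:(k,j)∈Ê} z_{kj} − Σ_{k:(j,k)∈Ê} z_{jk} + z_{dj} − s_j into the objective, the flow LP of the adversarial problem is equivalent to min_{z≥0} Σ_{(k,j)∈Ê}(γ_{kj} + δ̲_k − δ̲_j) z_{kj} + Σ_j (δ̄_j − δ̲_j) z_{dj} + Σ_j δ̲_j s_j subject to the same balance constraints; moreover all cost coefficients in this reformulation are nonnegative, since |δ̲_k − δ̲_j| ≤ γ_{kj} for all (k,j) ∈ Ê and δ̄_j ≥ δ̲_j for all j. -/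
/-- substituting the balance equations into the objective, the flow LP
objective equals `Σ (γ_kj + lo_k - lo_j) z_kj + Σ (hi_j - lo_j) z_dj + Σ lo_j s_j`, and all
cost coefficients of this reformulation are nonnegative, since `|lo_k - lo_j| ≤ γ_kj` for
arcs `(k,j) ∈ Ê` and `lo ≤ hi`. -/
theorem stmt16 {n : ℕ} (Ehat : Fin n → Fin n → Prop) [∀ k j, Decidable (Ehat k j)]
    (γ : Fin n → Fin n → ℝ) (hγsymm : ∀ k j, γ k j = γ j k) (hγnonneg : ∀ k j, 0 ≤ γ k j)
    (lo hi : Fin n → ℝ)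
    (hlip : ∀ k j, Ehat k j → |lo k - lo j| ≤ γ k j) (hlohi : ∀ j, lo j ≤ hi j)
    (s : Fin n → ℝ) (zE : Fin n → Fin n → ℝ) (zd zjd : Fin n → ℝ)
    (hzE : ∀ k j, 0 ≤ zE k j) (hzd : ∀ j, 0 ≤ zd j) (hzjd : ∀ j, 0 ≤ zjd j)
    (hbal : ∀ j, (∑ k, if Ehat k j then zE k j else 0)
        - (∑ k, if Ehat j k then zE j k else 0) + zd j - zjd j = s j) :
    ((∑ k, ∑ j, if Ehat k j then γ k j * zE k j else 0)
        + ∑ j, hi j * zd j - ∑ j, lo j * zjd j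
      = (∑ k, ∑ j, if Ehat k j then (γ k j + lo k - lo j) * zE k j else 0)
        + ∑ j, (hi j - lo j) * zd j + ∑ j, lo j * s j) ∧
    (∀ k j, Ehat k j → 0 ≤ γ k j + lo k - lo j) ∧ (∀ j, 0 ≤ hi j - lo j) := by
  refine ⟨?_, fun k j hkj => by have := hlip k j hkj; rw [abs_le] at this; linarith [this.1],
    fun j => by linarith [hlohi j]⟩
  have key : ∀ j, lo j * s j = lo j * (∑ k, if Ehat k j then zE k j else 0)
      - lo j * (∑ k, if Ehat j k then zE j k else 0) + lo j * zd j - lo j * zjd j := by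
    intro j; rw [← hbal j]; ring
  have h1 : (∑ j, lo j * s j)
      = (∑ j, ∑ k, if Ehat k j then lo j * zE k j else 0)
        - (∑ j, ∑ k, if Ehat j k then lo j * zE j k else 0)
        + ∑ j, lo j * zd j - ∑ j, lo j * zjd j := by
    rw [← Finset.sum_sub_distrib, ← Finset.sum_add_distrib, ← Finset.sum_sub_distrib]
    refine Finset.sum_congr rfl fun j _ => ?_
    rw [key j, Finset.mul_sum, Finset.mul_sum]
    simp [mul_ite]
  have h2 : (∑ j : Fin n, ∑ k : Fin n, if Ehat k j then lo j * zE k j else 0)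
      = ∑ k : Fin n, ∑ j : Fin n, if Ehat k j then lo j * zE k j else 0 :=
    Finset.sum_comm
  have h3 : (∑ k : Fin n, ∑ j : Fin n, if Ehat k j then (γ k j + lo k - lo j) * zE k j else 0)
      = (∑ k, ∑ j, if Ehat k j then γ k j * zE k j else 0)
        + (∑ k, ∑ j, if Ehat k j then lo k * zE k j else 0)
        - (∑ k, ∑ j, if Ehat k j then lo j * zE k j else 0) := by
    simp_rw [← Finset.sum_add_distrib, ← Finset.sum_sub_distrib]
    refine Finset.sum_congr rfl fun k _ => Finset.sum_congr rfl fun j _ => ?_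
    by_cases h : Ehat k j <;> simp [h] <;> ring
  have h4 : (∑ j : Fin n, ∑ k : Fin n, if Ehat j k then lo j * zE j k else 0)
      = ∑ k : Fin n, ∑ j : Fin n, if Ehat k j then lo k * zE k j else 0 := rfl
  rw [h3, h1, h2, h4]
  simp only [sub_mul]
  rw [Finset.sum_sub_distrib]
  ring
end
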